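/- arXiv:math/0502499 — 3 statements merged into one kernel-verified Lean document; each statement's English description precedes it below -/
import Mathlib

section
/- Let (W,S) be a Coxeter system, and write T̃_u T̃_{v^{-1}}^{-1} = Σ_{x∈W} R^u_{x,v} T̃_x in the generic Iwahori–Hecke algebra of (W,S). Then for all u, v, x ∈ W there exists a polynomial p ∈ ℤ[X] with R^u_{x,v} = p(Q) such that every exponent i with nonzero coefficient in p satisfies i ≡ ℓ(uv) − ℓ(x) (mod 2). -/
/-
Normalize `T̃_w = q^{-ℓ(w)/2} T_w`. The quadratic relation becomes `T̃_s² = 1 - Q T̃_s`, so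
`T̃_s⁻¹ = T̃_s + Q`, and `T̃_s T̃_w` is `T̃_{sw}` or `T̃_{sw} - Q T̃_w` according as
`ℓ(sw) > ℓ(w)` or not. Hence, giving `Q^i T̃_y` degree `i + ℓ(y)` mod 2, the `ℤ`-span of
these elements is a `ℤ/2`-graded ring in which `T̃_u` and `T̃_{v⁻¹}⁻¹` are homogeneous of
degrees `ℓ(u)` and `ℓ(v)`. The `T̃_x`-coefficient of a homogeneous element of degree `ε` is a
polynomial in `Q` whose exponents are all `≡ ε - ℓ(x)`, and `ℓ(uv) ≡ ℓ(u) + ℓ(v)`.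
-/

open LaurentPolynomial

noncomputable section

variable {B W : Type*} [Group W] {M : CoxeterMatrix B}

namespace IwahoriHecke

open Polynomial

variable {H : Type*} [Ring H] [Algebra (LaurentPolynomial ℤ) H]

def Q : LaurentPolynomial ℤ := T (-1) - T 1

structure IsHeckeFamily (cs : CoxeterSystem M W) (Tw : W → H) : Prop where
  map_one : Tw 1 = 1
  map_mul_of_length_add : ∀ a b : W, cs.length (a * b) = cs.length a + cs.length b →
    Tw a * Tw b = Tw (a * b)
  quadratic : ∀ i : B, (Tw (cs.simple i) - algebraMap (LaurentPolynomial ℤ) H (T 2)) *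
    (Tw (cs.simple i) + 1) = 0

def normalized (cs : CoxeterSystem M W) (Tw : W → H) (w : W) : H :=
  (T (-(cs.length w : ℤ)) : LaurentPolynomial ℤ) • Tw w

def parityComponent (cs : CoxeterSystem M W) (Tw : W → H) (ε : ZMod 2) : Submodule ℤ H :=
  Submodule.span ℤ {h | ∃ (i : ℕ) (y : W),
    (i + cs.length y : ZMod 2) = ε ∧ h = Q ^ i • normalized cs Tw y}

def polyQOfParity (ε : ZMod 2) : Submodule ℤ (LaurentPolynomial ℤ) where
  carrier := {a | ∃ p : ℤ[X], a = aeval Q p ∧ ∀ i : ℕ, p.coeff i ≠ 0 → (i : ZMod 2) = ε}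
  zero_mem' := ⟨0, by simp, by simp⟩
  add_mem' := by
    rintro _ _ ⟨p, rfl, hp⟩ ⟨q, rfl, hq⟩
    refine ⟨p + q, by simp, fun i hi => ?_⟩
    by_cases h : p.coeff i = 0
    · exact hq i (by simpa [h] using hi)
    · exact hp i h
  smul_mem' := by
    rintro n _ ⟨p, rfl, hp⟩
    exact ⟨n • p, by simp, fun i hi => hp i fun h => hi (by simp [h])⟩

theorem cast_length_mul (cs : CoxeterSystem M W) (a b : W) :
    (cs.length (a * b) : ZMod 2) = cs.length a + cs.length b := by
  have := map_mul cs.lengthParity a b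
  simp only [CoxeterSystem.lengthParity_eq_ofAdd_length, ← ofAdd_add] at this
  exact_mod_cast this

theorem cast_length_simple_mul (cs : CoxeterSystem M W) (i : B) (w : W) :
    (cs.length (cs.simple i * w) : ZMod 2) = cs.length w + 1 := by
  rw [cast_length_mul, cs.length_simple, Nat.cast_one, add_comm]

section

variable {cs : CoxeterSystem M W} {Tw : W → H}

theorem normalized_one (hT : IsHeckeFamily cs Tw) : normalized cs Tw 1 = 1 := by
  simp [normalized, hT.map_one]

theorem normalized_simple_mul_self (hT : IsHeckeFamily cs Tw) (i : B) :
    normalized cs Tw (cs.simple i) * normalized cs Tw (cs.simple i)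
      = 1 - Q • normalized cs Tw (cs.simple i) := by
  set t := Tw (cs.simple i)
  have hsq : t * t = (T 2 - 1 : LaurentPolynomial ℤ) • t + (T 2 : LaurentPolynomial ℤ) • 1 := by
    rw [sub_smul, one_smul, Algebra.smul_def, Algebra.smul_def, mul_one, ← sub_eq_zero,
      ← hT.quadratic i]
    noncomm_ring
  have hT2 : (T 2 : LaurentPolynomial ℤ) = T 1 * T 1 := by rw [← T_add]; rfl
  rw [normalized, cs.length_simple, smul_mul_smul_comm, hsq, smul_add, smul_smul, smul_smul, Q,
    Nat.cast_one, hT2]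
  have hinv : (T (-1) * T 1 : LaurentPolynomial ℤ) = 1 := by rw [← T_add]; rfl
  match_scalars
  · linear_combination (T (-1) * T 1) * hinv
  · linear_combination (T (-1) * T 1 + 1) * hinv

theorem normalized_simple_mul_of_not_isLeftDescent (hT : IsHeckeFamily cs Tw) {w : W} {i : B}
    (h : ¬ cs.IsLeftDescent w i) :
    normalized cs Tw (cs.simple i) * normalized cs Tw w = normalized cs Tw (cs.simple i * w) := by
  have hl : cs.length (cs.simple i * w) = cs.length (cs.simple i) + cs.length w := by
    rw [cs.length_simple, cs.not_isLeftDescent_iff.mp h, add_comm]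
  rw [normalized, normalized, normalized, smul_mul_smul_comm, hT.map_mul_of_length_add _ _ hl,
    ← T_add, hl]
  push_cast
  ring_nf

theorem normalized_simple_mul_of_isLeftDescent (hT : IsHeckeFamily cs Tw) {w : W} {i : B}
    (h : cs.IsLeftDescent w i) :
    normalized cs Tw (cs.simple i * w)
      = (normalized cs Tw (cs.simple i) + Q • 1) * normalized cs Tw w := by
  have hw : normalized cs Tw (cs.simple i) * normalized cs Tw (cs.simple i * w)
      = normalized cs Tw w := by
    rw [normalized_simple_mul_of_not_isLeftDescent hT
      (cs.isLeftDescent_iff_not_isLeftDescent_mul.mp h), cs.simple_mul_simple_cancel_left]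
  rw [← hw, ← mul_assoc, add_mul, normalized_simple_mul_self hT, smul_mul_assoc, one_mul,
    sub_add_cancel, one_mul]

theorem normalized_simple_mul_add_Q_smul_one (hT : IsHeckeFamily cs Tw) (i : B) :
    normalized cs Tw (cs.simple i) * (normalized cs Tw (cs.simple i) + Q • 1) = 1 := by
  rw [mul_add, normalized_simple_mul_self hT, mul_smul_comm, mul_one, sub_add_cancel]

theorem add_Q_smul_one_mul_normalized_simple (hT : IsHeckeFamily cs Tw) (i : B) :
    (normalized cs Tw (cs.simple i) + Q • 1) * normalized cs Tw (cs.simple i) = 1 := by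
  rw [add_mul, normalized_simple_mul_self hT, smul_mul_assoc, one_mul, sub_add_cancel]

theorem apply_mem_of_mem_parityComponent {H' : Type*} [AddCommGroup H'] {N : Submodule ℤ H'}
    (f : H →ₗ[ℤ] H') {ε : ZMod 2}
    (hf : ∀ (i : ℕ) (y : W), (i + cs.length y : ZMod 2) = ε → f (Q ^ i • normalized cs Tw y) ∈ N)
    {h : H} (hh : h ∈ parityComponent cs Tw ε) : f h ∈ N :=
  (Submodule.map_span_le f _ N).mpr (by rintro _ ⟨i, y, hy, rfl⟩; exact hf i y hy)
    (Submodule.mem_map_of_mem hh)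

theorem Q_pow_smul_normalized_mem {i : ℕ} {y : W} {ε : ZMod 2}
    (h : (i + cs.length y : ZMod 2) = ε) :
    Q ^ i • normalized cs Tw y ∈ parityComponent cs Tw ε :=
  Submodule.subset_span ⟨i, y, h, rfl⟩

theorem normalized_mem (y : W) : normalized cs Tw y ∈ parityComponent cs Tw (cs.length y) := by
  simpa using Q_pow_smul_normalized_mem (cs := cs) (Tw := Tw) (i := 0) (y := y) (by simp)

theorem one_mem_parityComponent (hT : IsHeckeFamily cs Tw) : (1 : H) ∈ parityComponent cs Tw 0 := by
  simpa [normalized_one hT] using normalized_mem (cs := cs) (Tw := Tw) 1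

theorem Q_pow_smul_mem (i : ℕ) {δ : ZMod 2} {h : H} (hh : h ∈ parityComponent cs Tw δ) :
    Q ^ i • h ∈ parityComponent cs Tw (i + δ) := by
  refine apply_mem_of_mem_parityComponent (DistribSMul.toLinearMap ℤ H (Q ^ i))
    (fun j y hy => ?_) hh
  change Q ^ i • Q ^ j • normalized cs Tw y ∈ _
  rw [smul_smul, ← pow_add]
  exact Q_pow_smul_normalized_mem (by push_cast; rw [← hy]; ring)

theorem normalized_simple_mul_normalized_mem (hT : IsHeckeFamily cs Tw) (i : B) (y : W) :
    normalized cs Tw (cs.simple i) * normalized cs Tw y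
      ∈ parityComponent cs Tw (cs.length y + 1) := by
  have hsy := cast_length_simple_mul cs i y ▸ normalized_mem (Tw := Tw) (cs.simple i * y)
  by_cases hy : cs.IsLeftDescent y i
  · have hQ : Q • normalized cs Tw y ∈ parityComponent cs Tw (cs.length y + 1) := by
      simpa [add_comm] using Q_pow_smul_mem 1 (normalized_mem (cs := cs) (Tw := Tw) y)
    have hsub : normalized cs Tw (cs.simple i) * normalized cs Tw y
        = normalized cs Tw (cs.simple i * y) - Q • normalized cs Tw y := by
      rw [normalized_simple_mul_of_isLeftDescent hT hy, add_mul, smul_one_mul, add_sub_cancel_right]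
    rw [hsub]
    exact sub_mem hsy hQ
  · rwa [normalized_simple_mul_of_not_isLeftDescent hT hy]

theorem normalized_simple_mul_mem (hT : IsHeckeFamily cs Tw) (i : B) {δ : ZMod 2} {h : H}
    (hh : h ∈ parityComponent cs Tw δ) :
    normalized cs Tw (cs.simple i) * h ∈ parityComponent cs Tw (δ + 1) := by
  refine apply_mem_of_mem_parityComponent (LinearMap.mulLeft ℤ (normalized cs Tw (cs.simple i)))
    (fun j y hy => ?_) hh
  rw [LinearMap.mulLeft_apply, mul_smul_comm, ← hy, add_assoc]
  exact Q_pow_smul_mem j (normalized_simple_mul_normalized_mem hT i y)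

theorem add_Q_smul_one_mul_mem (hT : IsHeckeFamily cs Tw) (i : B) {δ : ZMod 2} {h : H}
    (hh : h ∈ parityComponent cs Tw δ) :
    (normalized cs Tw (cs.simple i) + Q • 1) * h ∈ parityComponent cs Tw (δ + 1) := by
  rw [add_mul, smul_one_mul]
  exact add_mem (normalized_simple_mul_mem hT i hh)
    (by simpa [add_comm] using Q_pow_smul_mem 1 hh)

theorem normalized_mul_mem (hT : IsHeckeFamily cs Tw) (w : W) {δ : ZMod 2} {h : H}
    (hh : h ∈ parityComponent cs Tw δ) :
    normalized cs Tw w * h ∈ parityComponent cs Tw (cs.length w + δ) := by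
  induction w using cs.simple_induction_left with
  | one => simpa [normalized_one hT] using hh
  | mul_simple_left w i ih =>
    rw [cast_length_simple_mul, add_right_comm]
    by_cases hw : cs.IsLeftDescent w i
    · rw [normalized_simple_mul_of_isLeftDescent hT hw, mul_assoc]
      exact add_Q_smul_one_mul_mem hT i ih
    · rw [← normalized_simple_mul_of_not_isLeftDescent hT hw, mul_assoc]
      exact normalized_simple_mul_mem hT i ih

theorem mul_mem_parityComponent (hT : IsHeckeFamily cs Tw) {δ ε : ZMod 2} {a b : H}
    (ha : a ∈ parityComponent cs Tw δ) (hb : b ∈ parityComponent cs Tw ε) :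
    a * b ∈ parityComponent cs Tw (δ + ε) := by
  refine apply_mem_of_mem_parityComponent (LinearMap.mulRight ℤ b) (fun i y hy => ?_) ha
  rw [LinearMap.mulRight_apply, smul_mul_assoc, ← hy, add_assoc]
  exact Q_pow_smul_mem i (normalized_mul_mem hT y hb)

theorem exists_mem_normalized_mul_eq_one (hT : IsHeckeFamily cs Tw) (w : W) :
    ∃ g ∈ parityComponent cs Tw (cs.length w), normalized cs Tw w * g = 1 := by
  induction w using cs.simple_induction_left with
  | one => exact ⟨1, by simpa using one_mem_parityComponent hT, by rw [normalized_one hT, one_mul]⟩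
  | mul_simple_left w i ih =>
    obtain ⟨g, hg, hwg⟩ := ih
    have hsQ : normalized cs Tw (cs.simple i) + Q • 1 ∈ parityComponent cs Tw 1 := by
      simpa using add_Q_smul_one_mul_mem hT i (one_mem_parityComponent hT)
    rw [cast_length_simple_mul]
    by_cases hw : cs.IsLeftDescent w i
    · refine ⟨g * normalized cs Tw (cs.simple i), mul_mem_parityComponent hT hg
        (by simpa using normalized_mem (cs := cs) (Tw := Tw) (cs.simple i)), ?_⟩
      rw [normalized_simple_mul_of_isLeftDescent hT hw, mul_assoc, ← mul_assoc _ g, hwg, one_mul,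
        add_Q_smul_one_mul_normalized_simple hT]
    · refine ⟨g * (normalized cs Tw (cs.simple i) + Q • 1), mul_mem_parityComponent hT hg hsQ, ?_⟩
      rw [← normalized_simple_mul_of_not_isLeftDescent hT hw, mul_assoc, ← mul_assoc _ g, hwg,
        one_mul, normalized_simple_mul_add_Q_smul_one hT]

theorem Q_pow_mem (i : ℕ) : Q ^ i ∈ polyQOfParity i := by
  refine ⟨X ^ i, by simp, fun j hj => ?_⟩
  rw [coeff_X_pow] at hj
  rw [(ite_ne_right_iff.mp hj).1]

theorem T_length_mul_repr_mem (Tb : Module.Basis W (LaurentPolynomial ℤ) H) (x : W)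
    {ε : ZMod 2} {h : H} (hh : h ∈ parityComponent cs Tb ε) :
    T (cs.length x : ℤ) * Tb.repr h x ∈ polyQOfParity (ε - cs.length x) := by
  let coeff : H →ₗ[LaurentPolynomial ℤ] LaurentPolynomial ℤ :=
    LinearMap.mulLeft _ (T (cs.length x : ℤ)) ∘ₗ Tb.coord x
  refine apply_mem_of_mem_parityComponent (coeff.restrictScalars ℤ) (fun i y hy => ?_) hh
  change T _ * Tb.repr (Q ^ i • T _ • Tb y) x ∈ _
  classical
  rw [map_smul, map_smul, Tb.repr_self, Finsupp.smul_apply, Finsupp.smul_apply,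
    Finsupp.single_apply]
  by_cases hyx : y = x
  · subst hyx
    rw [if_pos rfl, smul_eq_mul, smul_eq_mul, mul_one, mul_left_comm, ← T_add, add_neg_cancel,
      T_zero, mul_one, ← hy, add_sub_cancel_right]
    exact Q_pow_mem i
  · rw [if_neg hyx, smul_zero, smul_zero, mul_zero]
    exact zero_mem _

end

end IwahoriHecke

open IwahoriHecke

/-- In the generic Iwahori–Hecke algebra of a Coxeter system `(W,S)`
(an algebra over `ℤ[q^{1/2}, q^{-1/2}]`, here `LaurentPolynomial ℤ` with variable `T 1 = q^{1/2}`,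
so `q = T 2`), with standard basis `T_w` satisfying `T_u T_v = T_{uv}` when lengths add and the
quadratic relation `(T_s - q)(T_s + 1) = 0`, write
`T̃_u T̃_{v⁻¹}⁻¹ = Σ_x R^u_{x,v} T̃_x` where `T̃_w = q^{-ℓ(w)/2} T_w`.
Then `R^u_{x,v}` is a polynomial with integer coefficients in `Q = q^{-1/2} - q^{1/2}` in which
every exponent with nonzero coefficient is congruent to `ℓ(uv) - ℓ(x)` modulo 2. -/
theorem wakimoto_coeff_poly_in_Q_parity
    (cs : CoxeterSystem M W)
    {H : Type*} [Ring H] [Algebra (LaurentPolynomial ℤ) H]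
    (Tb : Module.Basis W (LaurentPolynomial ℤ) H)
    (hmul : ∀ a b : W, cs.length (a * b) = cs.length a + cs.length b →
      Tb a * Tb b = Tb (a * b))
    (hquad : ∀ i : B, (Tb (cs.simple i) - algebraMap (LaurentPolynomial ℤ) H (T 2)) *
      (Tb (cs.simple i) + 1) = 0)
    (Tinv : W → H)
    (hTinv : ∀ w : W, Tb w * Tinv w = 1 ∧ Tinv w * Tb w = 1)
    (u v x : W)
    -- `R^u_{x,v}`: the coefficient of `T̃_x = T (-ℓ(x)) • T_x` in the expansion of
    -- `T̃_u T̃_{v⁻¹}⁻¹ = (T (-ℓ(u)) • T_u) * (T (ℓ(v)) • (T_{v⁻¹})⁻¹)`.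
    (Rcoef : LaurentPolynomial ℤ)
    (hR : Rcoef = T (cs.length x : ℤ) *
      Tb.repr (((T (-(cs.length u : ℤ)) : LaurentPolynomial ℤ) • Tb u) * ((T (cs.length v : ℤ) : LaurentPolynomial ℤ) • Tinv v⁻¹)) x) :
    ∃ p : Polynomial ℤ,
      Rcoef = Polynomial.aeval (T (-1) - T 1 : LaurentPolynomial ℤ) p ∧
      ∀ i : ℕ, p.coeff i ≠ 0 → (i : ℤ) ≡ (cs.length (u * v) : ℤ) - cs.length x [ZMOD 2] := by
  have hT : IsHeckeFamily cs Tb :=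
    { map_one := (IsIdempotentElem.iff_eq_one_of_isUnit ⟨⟨_, _, (hTinv 1).1, (hTinv 1).2⟩, rfl⟩).mp
        (show Tb 1 * Tb 1 = Tb 1 by simpa using hmul 1 1 (by simp))
      map_mul_of_length_add := hmul
      quadratic := hquad }
  set g : H := (T (cs.length v : ℤ) : LaurentPolynomial ℤ) • Tinv v⁻¹
  have hg : g * normalized cs Tb v⁻¹ = 1 := by
    rw [normalized, cs.length_inv, smul_mul_smul_comm, (hTinv v⁻¹).2, ← T_add, add_neg_cancel,
      T_zero, one_smul]
  obtain ⟨g', hg'_mem, hg'⟩ := exists_mem_normalized_mul_eq_one hT v⁻¹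
  have hg_mem : g ∈ parityComponent cs Tb (cs.length v) := by
    rwa [left_inv_eq_right_inv hg hg', ← cs.length_inv v]
  obtain ⟨p, hp, hpar⟩ :=
    T_length_mul_repr_mem Tb x (mul_mem_parityComponent hT (normalized_mem u) hg_mem)
  refine ⟨p, hR.trans hp, fun i hi => (ZMod.intCast_eq_intCast_iff _ _ 2).mp ?_⟩
  push_cast
  rw [cast_length_mul]
  exact hpar i hi
end
end

section
/- Let (W,S) be a Coxeter system, and write T̃_u T̃_{v^{-1}}^{-1} = Σ_{x∈W} R^u_{x,v} T̃_x in the generic Iwahori–Hecke algebra of (W,S). If R^u_{x,v} ≠ 0, then x ≤ uv in the Bruhat order on W. -/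
/-!
Tits' sign representation of `W` on `W × ℤˣ` yields a cocycle `η(w, t) = ±1` which is `-1`
exactly when `t` is a left inversion of `w`, and which equals `(-1)^n` for `n` the number of
occurrences of `t` in the left inversion sequence of any word for `w`. So a left inversion `t`
of `w` occurs in every word for `w`, and deleting that letter gives a word for `t w` (strong
exchange). Consequently, if `x` is reached from `w` by repeatedly multiplying on the left by left
inversions, `x` is the product of a subword of any reduced word for `w`, hence `x ≤ w`.

The scalars `q^{±ℓ/2}` are units, so `R^u_{x,v} ≠ 0` says that `T_x` occurs in
`T_u T_{v⁻¹}⁻¹`. Write `v = s v'` with `ℓ(v) = ℓ(v') + 1`, so `T_{v⁻¹}⁻¹ = T_s⁻¹ T_{v'⁻¹}⁻¹`.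
If `us < u` then `T_u T_s⁻¹ = T_{us}`; otherwise `T_u T_s⁻¹ = q⁻¹ T_{us} + (q⁻¹ - 1) T_u`.
By induction on `ℓ(v)`, `x` lies below `us v' = uv` or below `uv'`, and in the second case
`t = u s u⁻¹` takes `u s v'` to `uv'` with `η(usv', t) = η(us, t) η(v', s) = -1`.
-/

open LaurentPolynomial

noncomputable section

variable {B W : Type*} [Group W] {M : CoxeterMatrix B}

/-- The Bruhat order on a Coxeter group: `x ≤ w` iff some reduced word for `w` contains a
subword (sublist) that is a reduced word for `x`. -/
def bruhatLE (cs : CoxeterSystem M W) (x w : W) : Prop :=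
  ∃ ω : List B, cs.IsReduced ω ∧ cs.wordProd ω = w ∧
    ∃ ω' : List B, ω'.Sublist ω ∧ cs.IsReduced ω' ∧ cs.wordProd ω' = x

namespace CoxeterSystem

open List

variable (cs : CoxeterSystem M W)

local prefix:100 "s" => cs.simple
local prefix:100 "π" => cs.wordProd
local prefix:100 "ℓ" => cs.length
local prefix:100 "lis" => cs.leftInvSeq

open scoped Classical

theorem conj_simple_eq_simple_iff (i : B) (t : W) : MulAut.conj (s i) t = s i ↔ t = s i :=
  Iff.trans (by rw [show MulAut.conj (s i) (s i) = s i by simp])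
    (MulAut.conj (s i)).injective.eq_iff

/-- Tits' permutation of `T × {±1}` for the simple reflection `s i`, extended to `W × ℤˣ`. -/
def signPerm (i : B) : Equiv.Perm (W × ℤˣ) :=
  Function.Involutive.toPerm
    (fun p => (MulAut.conj (s i) p.1, if p.1 = s i then -p.2 else p.2)) <| by
      rintro ⟨t, e⟩
      have hconj : MulAut.conj (s i) (MulAut.conj (s i) t) = t := by
        rw [← MulAut.mul_apply, ← map_mul, simple_mul_simple_self, map_one, MulAut.one_apply]
      dsimp only
      rw [hconj, cs.conj_simple_eq_simple_iff]
      split_ifs <;> simp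

theorem signPerm_apply (i : B) (t : W) (e : ℤˣ) :
    cs.signPerm i (t, e) = (MulAut.conj (s i) t, if t = s i then -e else e) :=
  rfl

theorem prod_map_signPerm_apply (ω : List B) (t : W) (e : ℤˣ) :
    (ω.map cs.signPerm).prod (t, e) =
      (MulAut.conj (π ω) t, e * (-1) ^ (lis ω).count (MulAut.conj (π ω) t)) := by
  induction ω with
  | nil => simp
  | cons i ω ih =>
    rw [map_cons, prod_cons, Equiv.Perm.mul_apply, ih, signPerm_apply, wordProd_cons, map_mul,
      MulAut.mul_apply, leftInvSeq, count_cons,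
      count_map_of_injective _ _ (MulAut.conj (s i)).injective]
    generalize MulAut.conj (π ω) t = x
    simp only [beq_iff_eq, eq_comm (a := s i), cs.conj_simple_eq_simple_iff]
    split_ifs <;> simp [pow_succ]

theorem alternatingWord_two_mul_succ (i j : B) (m : ℕ) :
    alternatingWord i j (2 * (m + 1)) = i :: j :: alternatingWord i j (2 * m) := by
  rw [show 2 * (m + 1) = 2 * m + 1 + 1 by ring, alternatingWord_succ', alternatingWord_succ',
    if_neg (by simp [parity_simps]), if_pos (by simp [parity_simps])]

theorem wordProd_alternatingWord_two_mul_self (i j : B) :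
    π (alternatingWord i j (2 * M i j)) = 1 := by
  rw [prod_alternatingWord_eq_mul_pow, if_pos (by simp), Nat.mul_div_cancel_left _ two_pos,
    simple_mul_simple_pow, one_mul]

theorem getElem_leftInvSeq_alternatingWord_eq_pow (i j : B) (p k : ℕ) (hk : k < 2 * p) :
    (lis (alternatingWord i j (2 * p)))[k]'(by simpa using hk) = s i * (s j * s i) ^ k := by
  rw [getElem_leftInvSeq_alternatingWord _ _ _ _ _ hk, prod_alternatingWord_eq_mul_pow,
    if_neg (by simp [parity_simps]), show (2 * k + 1) / 2 = k by omega]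

theorem even_count_leftInvSeq_alternatingWord (i j : B) (t : W) :
    Even ((lis (alternatingWord i j (2 * M i j))).count t) := by
  generalize hL : lis (alternatingWord i j (2 * M i j)) = L
  have hlen : L.length = 2 * M i j := by simp [← hL]
  have hL_getElem (k : ℕ) (hk : k < L.length) : L[k] = s i * (s j * s i) ^ k := by
    subst hL
    exact cs.getElem_leftInvSeq_alternatingWord_eq_pow i j _ k (by simpa using hk)
  have hperiodic : L.drop (M i j) = L.take (M i j) := by
    refine ext_getElem (by simp [hlen]; omega) fun k h₁ _ => ?_
    simp only [length_drop, hlen] at h₁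
    rw [getElem_drop, getElem_take, hL_getElem, hL_getElem, pow_add, simple_mul_simple_pow',
      one_mul]
  rw [← take_append_drop (M i j) L, count_append, hperiodic]
  exact ⟨_, rfl⟩

theorem prod_map_signPerm_alternatingWord (i j : B) (m : ℕ) :
    ((alternatingWord i j (2 * m)).map cs.signPerm).prod =
      (cs.signPerm i * cs.signPerm j) ^ m := by
  induction m with
  | zero => simp [alternatingWord]
  | succ m ih => rw [alternatingWord_two_mul_succ, map_cons, map_cons, prod_cons, prod_cons, ih,
      pow_succ', mul_assoc]

theorem isLiftable_signPerm : M.IsLiftable cs.signPerm := by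
  intro i j
  ext ⟨t, e⟩ : 1
  rw [← prod_map_signPerm_alternatingWord, prod_map_signPerm_apply,
    wordProd_alternatingWord_two_mul_self, map_one, MulAut.one_apply,
    (cs.even_count_leftInvSeq_alternatingWord i j t).neg_one_pow, mul_one]
  rfl

def signRep : W →* Equiv.Perm (W × ℤˣ) :=
  cs.lift ⟨cs.signPerm, cs.isLiftable_signPerm⟩

theorem signRep_wordProd (ω : List B) : cs.signRep (π ω) = (ω.map cs.signPerm).prod := by
  rw [wordProd, map_list_prod, map_map]
  congr 2
  ext1 i
  exact cs.lift_apply_simple cs.isLiftable_signPerm i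

/-- The Tits cocycle; it is `-1` exactly at the left inversions `t` of `w`. -/
def inversionSign (w t : W) : ℤˣ :=
  (cs.signRep w (MulAut.conj w⁻¹ t, 1)).2

theorem signRep_apply (w t : W) (e : ℤˣ) :
    cs.signRep w (MulAut.conj w⁻¹ t, e) = (t, e * cs.inversionSign w t) := by
  obtain ⟨ω, rfl⟩ := cs.wordProd_surjective w
  simp [inversionSign, signRep_wordProd, prod_map_signPerm_apply, mul_assoc]

theorem inversionSign_wordProd (ω : List B) (t : W) :
    cs.inversionSign (π ω) t = (-1) ^ (lis ω).count t := by
  simp [inversionSign, signRep_wordProd, prod_map_signPerm_apply, mul_assoc]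

theorem inversionSign_mul (x y t : W) :
    cs.inversionSign (x * y) t =
      cs.inversionSign x t * cs.inversionSign y (MulAut.conj x⁻¹ t) := by
  have h := cs.signRep_apply (x * y) t 1
  rw [map_mul, Equiv.Perm.mul_apply, mul_inv_rev, map_mul, MulAut.mul_apply, signRep_apply,
    signRep_apply, Prod.mk.injEq] at h
  rw [← one_mul (cs.inversionSign (x * y) t), ← h.2, one_mul, mul_comm]

theorem inversionSign_one (t : W) : cs.inversionSign 1 t = 1 := by
  simpa using cs.inversionSign_wordProd [] t

theorem inversionSign_simple_self (i : B) : cs.inversionSign (s i) (s i) = -1 := by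
  simpa using cs.inversionSign_wordProd [i] (s i)

theorem mem_leftInvSeq_of_inversionSign_eq_neg_one {ω : List B} {t : W}
    (h : cs.inversionSign (π ω) t = -1) : t ∈ lis ω := by
  rw [inversionSign_wordProd] at h
  by_contra hmem
  rw [count_eq_zero_of_not_mem hmem, pow_zero] at h
  exact absurd h (by decide)

theorem inversionSign_self {t : W} (ht : cs.IsReflection t) : cs.inversionSign t t = -1 := by
  obtain ⟨w, i, rfl⟩ := ht
  have hw : MulAut.conj w⁻¹ (w * s i * w⁻¹) = s i := by simp [mul_assoc]
  have hws : MulAut.conj (w * s i)⁻¹ (w * s i * w⁻¹) = s i := by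
    simp only [MulAut.conj_apply]; group
  have hinv := cs.inversionSign_mul w w⁻¹ (w * s i * w⁻¹)
  rw [mul_inv_cancel, inversionSign_one, hw] at hinv
  rw [inversionSign_mul, inversionSign_mul, hw, hws, inversionSign_simple_self, mul_right_comm,
    ← hinv, one_mul]

theorem isLeftInversion_of_inversionSign_eq_neg_one {w t : W} (h : cs.inversionSign w t = -1) :
    cs.IsLeftInversion w t := by
  obtain ⟨ω, hω, rfl⟩ := cs.exists_isReduced w
  exact cs.isLeftInversion_of_mem_leftInvSeq hω (cs.mem_leftInvSeq_of_inversionSign_eq_neg_one h)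

theorem inversionSign_eq_neg_one_iff {w t : W} :
    cs.inversionSign w t = -1 ↔ cs.IsLeftInversion w t := by
  refine ⟨cs.isLeftInversion_of_inversionSign_eq_neg_one, fun ⟨ht, hlt⟩ => ?_⟩
  rcases Int.units_eq_one_or (cs.inversionSign w t) with h | h
  · -- Otherwise `t` would also be a left inversion of the longer element `t * w`.
    have htw : cs.inversionSign (t * w) t = -1 := by
      have hsplit := cs.inversionSign_mul t (t * w) t
      rw [← mul_assoc, ht.mul_self, one_mul, h, cs.inversionSign_self ht,
        show MulAut.conj t⁻¹ t = t by simp] at hsplit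
      simpa [neg_eq_iff_eq_neg] using hsplit.symm
    have hlt' := (cs.isLeftInversion_of_inversionSign_eq_neg_one htw).2
    rw [← mul_assoc, ht.mul_self, one_mul] at hlt'
    omega
  · exact h

theorem exists_eraseIdx_of_isLeftInversion {ω : List B} {t : W}
    (h : cs.IsLeftInversion (π ω) t) : ∃ j, t * π ω = π (ω.eraseIdx j) := by
  obtain ⟨j, hj, rfl⟩ := getElem_of_mem
    (cs.mem_leftInvSeq_of_inversionSign_eq_neg_one (cs.inversionSign_eq_neg_one_iff.mpr h))
  exact ⟨j, by rw [← getD_eq_getElem _ 1 hj, getD_leftInvSeq_mul_wordProd]⟩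

theorem exists_isReduced_sublist : ∀ ω : List B, ∃ σ, σ <+ ω ∧ cs.IsReduced σ ∧ π σ = π ω
  | [] => ⟨[], Sublist.slnil, by simp [IsReduced], rfl⟩
  | i :: ω => by
    obtain ⟨σ, hσω, hσ, hπ⟩ := exists_isReduced_sublist ω
    rcases cs.length_simple_mul (π σ) i with hup | hdown
    · refine ⟨i :: σ, hσω.cons_cons i, ?_, by rw [wordProd_cons, wordProd_cons, hπ]⟩
      rw [IsReduced, wordProd_cons, hup, hσ.eq, length_cons]
    · obtain ⟨j, hexch⟩ :=
        cs.exists_eraseIdx_of_isLeftInversion (ω := σ) ⟨cs.isReflection_simple i, by omega⟩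
      have : (σ.eraseIdx j).length ≤ ω.length :=
        (length_eraseIdx_le σ j).trans hσω.length_le
      obtain ⟨τ, hτ, hτred, hτπ⟩ := exists_isReduced_sublist (σ.eraseIdx j)
      exact ⟨τ, (hτ.trans ((eraseIdx_sublist σ j).trans hσω)).cons i, hτred,
        by rw [hτπ, ← hexch, wordProd_cons, hπ]⟩
termination_by ω => ω.length

/-- The Bruhat order, defined through reflections. -/
def ReflectionLE (x w : W) : Prop :=
  Relation.ReflTransGen (fun x w => ∃ t, cs.IsLeftInversion w t ∧ t * w = x) x w

variable {cs} in
theorem ReflectionLE.exists_sublist {x w : W} (h : cs.ReflectionLE x w) {τ : List B}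
    (hτ : π τ = w) : ∃ σ, σ <+ τ ∧ π σ = x := by
  induction h using Relation.ReflTransGen.head_induction_on with
  | refl => exact ⟨τ, Sublist.refl τ, hτ⟩
  | head hstep _ ih =>
    obtain ⟨σ, hστ, rfl⟩ := ih
    obtain ⟨t, ht, rfl⟩ := hstep
    obtain ⟨j, hj⟩ := cs.exists_eraseIdx_of_isLeftInversion ht
    exact ⟨σ.eraseIdx j, (eraseIdx_sublist σ j).trans hστ, hj.symm⟩

variable {cs} in
theorem ReflectionLE.bruhatLE {x w : W} (h : cs.ReflectionLE x w) : bruhatLE cs x w := by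
  obtain ⟨τ, hτ, rfl⟩ := cs.exists_isReduced w
  obtain ⟨σ, hστ, rfl⟩ := h.exists_sublist rfl
  obtain ⟨ρ, hρσ, hρ, hπ⟩ := cs.exists_isReduced_sublist σ
  exact ⟨τ, hτ, rfl, ρ, hρσ.trans hστ, hρ, hπ⟩

theorem reflectionLE_mul_simple_mul {u v : W} {i : B} (hu : ℓ u < ℓ (u * s i))
    (hv : ℓ v < ℓ (s i * v)) : cs.ReflectionLE (u * v) (u * (s i * v)) := by
  set t := MulAut.conj u (s i)
  have hsign : cs.inversionSign (u * s i * v) t = -1 := by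
    have hut : cs.IsLeftInversion (u * s i) t :=
      ⟨(cs.isReflection_simple i).conj u, by simpa [t, mul_assoc] using hu⟩
    have hvs : cs.inversionSign v (s i) = 1 :=
      (Int.units_eq_one_or _).resolve_right fun h =>
        (cs.inversionSign_eq_neg_one_iff.mp h).2.not_gt hv
    rw [inversionSign_mul, cs.inversionSign_eq_neg_one_iff.mpr hut,
      show MulAut.conj (u * s i)⁻¹ t = s i by simp only [t, MulAut.conj_apply]; group, hvs,
      mul_one]
  refine Relation.ReflTransGen.single ⟨t, ?_, by simp [t, mul_assoc]⟩
  rw [← mul_assoc]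
  exact cs.inversionSign_eq_neg_one_iff.mp hsign

section Hecke

variable {H : Type*} [Ring H] [Algebra ℤ[T;T⁻¹] H] {Tb : Module.Basis W ℤ[T;T⁻¹] H} {Tinv : W → H}

theorem basis_one_eq_one
    (hmul : ∀ a b : W, ℓ (a * b) = ℓ a + ℓ b → Tb a * Tb b = Tb (a * b))
    (hTinv : ∀ w : W, Tb w * Tinv w = 1 ∧ Tinv w * Tb w = 1) : Tb 1 = 1 :=
  calc Tb 1 = Tb 1 * Tb 1 * Tinv 1 := by rw [mul_assoc, (hTinv 1).1, mul_one]
    _ = 1 := by rw [hmul 1 1 (by simp), mul_one, (hTinv 1).1]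

theorem inv_basis_mul_of_length_add
    (hmul : ∀ a b : W, ℓ (a * b) = ℓ a + ℓ b → Tb a * Tb b = Tb (a * b))
    (hTinv : ∀ w : W, Tb w * Tinv w = 1 ∧ Tinv w * Tb w = 1) {a b : W}
    (h : ℓ (a * b) = ℓ a + ℓ b) : Tinv (a * b) = Tinv b * Tinv a :=
  left_inv_eq_right_inv (hTinv (a * b)).2 <| by
    rw [← hmul a b h, mul_assoc, ← mul_assoc (Tb b), (hTinv b).1, one_mul, (hTinv a).1]

theorem inv_basis_simple
    (hquad : ∀ i : B, (Tb (s i) - algebraMap (ℤ[T;T⁻¹]) H (T 2)) * (Tb (s i) + 1) = 0)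
    (hTinv : ∀ w : W, Tb w * Tinv w = 1 ∧ Tinv w * Tb w = 1) (i : B) :
    Tinv (s i) = (T (-2) : ℤ[T;T⁻¹]) • Tb (s i) + (T (-2) - 1 : ℤ[T;T⁻¹]) • 1 := by
  have hq : (T (-2) * T 2 : ℤ[T;T⁻¹]) = 1 := by rw [← T_add]; rfl
  have hsq : Tb (s i) * Tb (s i) = (T 2 - 1 : ℤ[T;T⁻¹]) • Tb (s i) + (T 2 : ℤ[T;T⁻¹]) • 1 := by
    have h := hquad i
    rw [sub_mul, mul_add, mul_add, mul_one, mul_one, ← Algebra.smul_def,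
      Algebra.algebraMap_eq_smul_one] at h
    linear_combination (norm := module) h
  refine left_inv_eq_right_inv (hTinv (s i)).2 ?_
  rw [mul_add, mul_smul_comm, mul_smul_comm, mul_one, hsq]
  match_scalars <;> linear_combination hq

theorem basis_mul_inv_basis_simple_of_length_lt
    (hmul : ∀ a b : W, ℓ (a * b) = ℓ a + ℓ b → Tb a * Tb b = Tb (a * b))
    (hTinv : ∀ w : W, Tb w * Tinv w = 1 ∧ Tinv w * Tb w = 1) {u : W} {i : B}
    (h : ℓ (u * s i) < ℓ u) : Tb u * Tinv (s i) = Tb (u * s i) := by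
  have := cs.length_mul_simple u i
  have hu : Tb (u * s i) * Tb (s i) = Tb u := by
    rw [hmul _ _ (by rw [simple_mul_simple_cancel_right, length_simple]; omega),
      simple_mul_simple_cancel_right]
  rw [← hu, mul_assoc, (hTinv _).1, mul_one]

theorem basis_mul_inv_basis_simple_of_lt_length
    (hmul : ∀ a b : W, ℓ (a * b) = ℓ a + ℓ b → Tb a * Tb b = Tb (a * b))
    (hquad : ∀ i : B, (Tb (s i) - algebraMap (ℤ[T;T⁻¹]) H (T 2)) * (Tb (s i) + 1) = 0)
    (hTinv : ∀ w : W, Tb w * Tinv w = 1 ∧ Tinv w * Tb w = 1) {u : W} {i : B}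
    (h : ℓ u < ℓ (u * s i)) :
    Tb u * Tinv (s i) =
      (T (-2) : ℤ[T;T⁻¹]) • Tb (u * s i) + (T (-2) - 1 : ℤ[T;T⁻¹]) • Tb u := by
  have := cs.length_mul_simple u i
  rw [inv_basis_simple cs hquad hTinv, mul_add, mul_smul_comm, mul_smul_comm, mul_one,
    hmul u (s i) (by rw [length_simple]; omega)]

theorem reflectionLE_of_repr_ne_zero
    (hmul : ∀ a b : W, ℓ (a * b) = ℓ a + ℓ b → Tb a * Tb b = Tb (a * b))
    (hquad : ∀ i : B, (Tb (s i) - algebraMap (ℤ[T;T⁻¹]) H (T 2)) * (Tb (s i) + 1) = 0)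
    (hTinv : ∀ w : W, Tb w * Tinv w = 1 ∧ Tinv w * Tb w = 1) {ω : List B} (hω : cs.IsReduced ω)
    {u x : W} (hx : Tb.repr (Tb u * Tinv (π ω)⁻¹) x ≠ 0) : cs.ReflectionLE x (u * π ω) := by
  induction ω generalizing u with
  | nil =>
    have hTinv_one : Tinv 1 = 1 := by
      simpa [cs.basis_one_eq_one hmul hTinv] using (hTinv 1).1
    rw [wordProd_nil, inv_one, hTinv_one, mul_one, Module.Basis.repr_self,
      Finsupp.single_apply] at hx
    obtain rfl : u = x := by by_contra h; simp [h] at hx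
    rw [wordProd_nil, mul_one]
    exact Relation.ReflTransGen.refl
  | cons i ω ih =>
    have hω' : cs.IsReduced ω := by simpa using hω.drop 1
    have hlen : ℓ (s i * π ω) = ℓ (π ω) + 1 := by
      have := hω.eq
      rw [wordProd_cons, length_cons, ← hω'.eq] at this
      omega
    have hsplit : Tinv (π (i :: ω))⁻¹ = Tinv (s i) * Tinv (π ω)⁻¹ := by
      rw [wordProd_cons, mul_inv_rev, inv_simple, inv_basis_mul_of_length_add cs hmul hTinv]
      rw [show (π ω)⁻¹ * s i = (s i * π ω)⁻¹ by rw [mul_inv_rev, inv_simple], length_inv,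
        length_inv, length_simple, hlen]
    rw [hsplit, ← mul_assoc] at hx
    rw [wordProd_cons]
    rcases cs.length_mul_simple u i with hup | hdown
    · rw [cs.basis_mul_inv_basis_simple_of_lt_length hmul hquad hTinv (by omega), add_mul,
        smul_mul_assoc, smul_mul_assoc, map_add, map_smul, map_smul, Finsupp.add_apply,
        Finsupp.smul_apply, Finsupp.smul_apply] at hx
      by_cases hus : Tb.repr (Tb (u * s i) * Tinv (π ω)⁻¹) x = 0
      · rw [hus, smul_zero, zero_add] at hx
        exact Relation.ReflTransGen.trans (ih hω' (right_ne_zero_of_smul hx))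
          (cs.reflectionLE_mul_simple_mul (by omega) (by omega))
      · simpa [mul_assoc] using ih hω' hus
    · rw [cs.basis_mul_inv_basis_simple_of_length_lt hmul hTinv (by omega)] at hx
      simpa [mul_assoc] using ih hω' hx

end Hecke

end CoxeterSystem

/-- In the generic Iwahori–Hecke algebra of a Coxeter system `(W,S)`
(an algebra over `ℤ[q^{1/2}, q^{-1/2}]`, here `LaurentPolynomial ℤ` with variable `T 1 = q^{1/2}`,
so `q = T 2`), with standard basis `T_w` satisfying `T_u T_v = T_{uv}` when lengths add and the
quadratic relation `(T_s - q)(T_s + 1) = 0`, write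
`T̃_u T̃_{v⁻¹}⁻¹ = Σ_x R^u_{x,v} T̃_x` where `T̃_w = q^{-ℓ(w)/2} T_w`.
If `R^u_{x,v} ≠ 0` then `x ≤ uv` in the Bruhat order. -/
theorem wakimoto_coeff_ne_zero_imp_bruhat_le
    (cs : CoxeterSystem M W)
    {H : Type*} [Ring H] [Algebra (LaurentPolynomial ℤ) H]
    (Tb : Module.Basis W (LaurentPolynomial ℤ) H)
    (hmul : ∀ a b : W, cs.length (a * b) = cs.length a + cs.length b →
      Tb a * Tb b = Tb (a * b))
    (hquad : ∀ i : B, (Tb (cs.simple i) - algebraMap (LaurentPolynomial ℤ) H (T 2)) *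
      (Tb (cs.simple i) + 1) = 0)
    (Tinv : W → H)
    (hTinv : ∀ w : W, Tb w * Tinv w = 1 ∧ Tinv w * Tb w = 1)
    (u v x : W)
    -- `R^u_{x,v}`: the coefficient of `T̃_x = T (-ℓ(x)) • T_x` in the expansion of
    -- `T̃_u T̃_{v⁻¹}⁻¹ = (T (-ℓ(u)) • T_u) * (T (ℓ(v)) • (T_{v⁻¹})⁻¹)`.
    (Rcoef : LaurentPolynomial ℤ)
    (hR : Rcoef = T (cs.length x : ℤ) *
      Tb.repr (((T (-(cs.length u : ℤ)) : LaurentPolynomial ℤ) • Tb u) * ((T (cs.length v : ℤ) : LaurentPolynomial ℤ) • Tinv v⁻¹)) x) :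
    Rcoef ≠ 0 → bruhatLE cs x (u * v) := by
  intro hne
  obtain ⟨ω, hω, rfl⟩ := cs.exists_isReduced v
  refine (cs.reflectionLE_of_repr_ne_zero hmul hquad hTinv hω fun h => hne ?_).bruhatLE
  rw [hR, smul_mul_smul_comm, map_smul, Finsupp.smul_apply, h, smul_zero, mul_zero]
end
end

section
/- Let (W,S) be a Coxeter system with length function ℓ and Bruhat order ≤. Let d be an integer, let m : W → ℤ[q,q^{-1}] be a function with finite support, and let P : W × W → ℤ[q] be a family of polynomials such that P(w,w) = 1 for all w, P(x,w) = 0 unless x ≤ w, and deg_q P(x,w) < (ℓ(w) − ℓ(x))/2 whenever x < w. Define Tr : W → ℤ[q,q^{-1}] by Tr(x) = Σ_{w ≥ x} (−1)^{ℓ(w)} m(w) P(x,w). Then for any fixed x ∈ W, the following are equivalent: (1) for all w ≥ x, Tr(w) is a polynomial in q of degree at most d − ℓ(w); (2) for all w ≥ x, m(w) is a polynomial in q of degree at most d − ℓ(w). -/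
/-!
Since `P w w = 1`, `Tr w = (-1)^ℓ(w) m w + Σ_{v > w} (-1)^ℓ(v) m v P(w,v)`, and the degree bound
on `P` makes the `v`-th term of degree `≤ d - ℓ w - 1` as soon as `deg m v ≤ d - ℓ v`. So bounds on
`m` give bounds on `Tr` termwise, and conversely by downward induction over the finite support of
`m`; this only uses that the Bruhat order is a partial order. Its transitivity is the subword
property: `x ≤ w` iff `w` is reached from `x` by steps `u < u t` (`t` a reflection,
`ℓ u < ℓ (u t)`). That follows from the strong exchange condition, which is read off from Tits'
sign representation of `W` on `W × {±1}`.
-/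

open LaurentPolynomial

variable {B W : Type*} [Group W] {M : CoxeterMatrix B}

/-- The strict Bruhat order. -/
def bruhatLT (cs : CoxeterSystem M W) (x w : W) : Prop :=
  bruhatLE cs x w ∧ x ≠ w

theorem iterate_conj_mul_apply {G A : Type*} [Group G] [CommMonoid A] (g : G) (χ : G → A)
    (n : ℕ) (t : G) (a : A) :
    (fun p : G × A => (g * p.1 * g⁻¹, χ p.1 * p.2))^[n] (t, a) =
      (g ^ n * t * (g ^ n)⁻¹, (∏ k ∈ Finset.range n, χ (g ^ k * t * (g ^ k)⁻¹)) * a) := by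
  induction n generalizing t a with
  | zero => simp
  | succ n ih =>
    rw [Function.iterate_succ_apply, ih, Finset.prod_range_succ']
    simp only [pow_succ, mul_inv_rev, pow_zero, one_mul, inv_one, mul_one, mul_assoc]

theorem Finset.prod_range_two_mul {A : Type*} [CommMonoid A] (f : ℕ → A) (n : ℕ) :
    ∏ l ∈ range (2 * n), f l = ∏ k ∈ range n, f (2 * k) * f (2 * k + 1) := by
  induction n with
  | zero => simp
  | succ n ih => rw [Nat.mul_succ, prod_range_succ, prod_range_succ, prod_range_succ, ih, mul_assoc]

namespace CoxeterSystem

open List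

open scoped Classical

variable (cs : CoxeterSystem M W)

local prefix:100 "s" => cs.simple
local prefix:100 "π" => cs.wordProd
local prefix:100 "ℓ" => cs.length
local prefix:100 "ris" => cs.rightInvSeq

theorem simple_conj_eq_simple_iff (i : B) (t : W) : s i * t * s i = s i ↔ t = s i := by
  constructor <;> intro h
  · simpa [mul_assoc] using congr_arg (fun u => s i * u * s i) h
  · simp [h]

noncomputable def reflectionRepSimple (i : B) : Equiv.Perm (W × ℤˣ) :=
  Function.Involutive.toPerm (fun p => (s i * p.1 * s i, if p.1 = s i then -p.2 else p.2))
    (fun ⟨t, ε⟩ => by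
      dsimp only
      rw [simple_conj_eq_simple_iff]
      by_cases h : t = s i <;> simp [h, mul_assoc])

theorem reflectionRepSimple_apply (i : B) (t : W) (ε : ℤˣ) :
    cs.reflectionRepSimple i (t, ε) = (s i * t * s i, if t = s i then -ε else ε) :=
  rfl

theorem simple_mul_pow_mul_simple (i j : B) (k : ℕ) :
    s j * (s i * s j) ^ k * s j = ((s i * s j) ^ k)⁻¹ := by
  have : s j * (s i * s j) * s j = (s i * s j)⁻¹ := by simp [mul_assoc]
  calc s j * (s i * s j) ^ k * s j = (s j * (s i * s j) * (s j)⁻¹) ^ k := by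
        rw [conj_pow, inv_simple]
    _ = ((s i * s j) ^ k)⁻¹ := by rw [inv_simple, this, inv_pow]

theorem reflectionRepSimple_mul_apply (i j : B) (t : W) (ε : ℤˣ) :
    (cs.reflectionRepSimple i * cs.reflectionRepSimple j) (t, ε) =
      ((s i * s j) * t * (s i * s j)⁻¹,
        ((if t = s j * (s i * s j) then -1 else 1) * (if t = s j then -1 else 1)) * ε) := by
  have hcond : s j * t * s j = s i ↔ t = s j * (s i * s j) := by
    constructor
    · intro h; simp [← h, ← mul_assoc]
    · rintro rfl; simp [mul_assoc]
  rw [Equiv.Perm.mul_apply, reflectionRepSimple_apply, reflectionRepSimple_apply, hcond]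
  refine Prod.ext (by simp [mul_assoc]) ?_
  split_ifs <;> simp

theorem pow_conj_eq_simple_mul_pow_iff (i j : B) (k n : ℕ) (t : W) :
    (s i * s j) ^ k * t * ((s i * s j) ^ k)⁻¹ = s j * (s i * s j) ^ n ↔
      t = s j * (s i * s j) ^ (2 * k + n) := by
  have hswap : ((s i * s j) ^ k)⁻¹ * s j = s j * (s i * s j) ^ k := by
    rw [← simple_mul_pow_mul_simple]; simp [mul_assoc]
  set c := s i * s j
  have hrhs : (c ^ k)⁻¹ * (s j * c ^ n) * c ^ k = s j * c ^ (2 * k + n) := by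
    rw [← mul_assoc, hswap, two_mul, pow_add, pow_add]; group
  rw [← hrhs]
  constructor
  · intro h; rw [← h]; group
  · rintro rfl; group

theorem prod_range_sign_conj_pow_eq_one (i j : B) (t : W) :
    ∏ k ∈ Finset.range (M i j),
      ((if (s i * s j) ^ k * t * ((s i * s j) ^ k)⁻¹ = s j * (s i * s j) then -1 else 1) *
        (if (s i * s j) ^ k * t * ((s i * s j) ^ k)⁻¹ = s j then -1 else 1) : ℤˣ) = 1 := by
  have h0 := fun k => pow_conj_eq_simple_mul_pow_iff cs i j k 0 t
  have h1 := fun k => pow_conj_eq_simple_mul_pow_iff cs i j k 1 t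
  simp only [pow_zero, mul_one, add_zero, pow_one] at h0 h1
  simp only [h0, h1]
  -- The reflections `s j * (s i * s j) ^ l` for `l < 2 * M i j` repeat with period `M i j`,
  -- so each of them occurs an even number of times.
  set f : ℕ → ℤˣ := fun l => if t = s j * (s i * s j) ^ l then -1 else 1
  have hper : ∀ l, f (M i j + l) = f l := by simp [f, pow_add]
  calc _ = ∏ l ∈ Finset.range (2 * M i j), f l := by
        rw [Finset.prod_range_two_mul]; exact Finset.prod_congr rfl fun k _ => mul_comm _ _
    _ = (∏ l ∈ Finset.range (M i j), f l) * ∏ l ∈ Finset.range (M i j), f l := by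
        rw [two_mul, Finset.prod_range_add]; simp only [hper]
    _ = 1 := Int.units_mul_self _

theorem reflectionRepSimple_isLiftable : M.IsLiftable cs.reflectionRepSimple := by
  intro i j
  ext ⟨t, ε⟩ : 1
  have hstep : ⇑(cs.reflectionRepSimple i * cs.reflectionRepSimple j) = fun p =>
      ((s i * s j) * p.1 * (s i * s j)⁻¹,
        ((if p.1 = s j * (s i * s j) then -1 else 1) * (if p.1 = s j then -1 else 1)) * p.2) :=
    funext fun p => reflectionRepSimple_mul_apply cs i j p.1 p.2
  rw [Equiv.Perm.coe_pow, hstep]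
  refine (iterate_conj_mul_apply (s i * s j) (fun x =>
    (if x = s j * (s i * s j) then -1 else 1) * (if x = s j then -1 else 1)) (M i j) t ε).trans ?_
  rw [prod_range_sign_conj_pow_eq_one, simple_mul_simple_pow]
  simp

noncomputable def reflectionRep : W →* Equiv.Perm (W × ℤˣ) :=
  cs.lift ⟨cs.reflectionRepSimple, cs.reflectionRepSimple_isLiftable⟩

theorem reflectionRep_simple (i : B) : cs.reflectionRep (s i) = cs.reflectionRepSimple i :=
  cs.lift_apply_simple cs.reflectionRepSimple_isLiftable i

theorem reflectionRep_wordProd_apply (ω : List B) (t : W) (ε : ℤˣ) :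
    cs.reflectionRep (π ω) (t, ε) =
      (π ω * t * (π ω)⁻¹, (-1) ^ (ris ω).count t * ε) := by
  induction ω generalizing ε with
  | nil => simp [wordProd_nil]
  | cons i ω ih =>
    have hcond : π ω * t * (π ω)⁻¹ = s i ↔ (π ω)⁻¹ * s i * π ω = t := by
      constructor <;> intro h <;> rw [← h] <;> group
    rw [wordProd_cons, map_mul, Equiv.Perm.mul_apply, ih, reflectionRep_simple,
      reflectionRepSimple_apply, rightInvSeq, count_cons]
    simp only [beq_iff_eq, hcond]
    refine Prod.ext (by simp [mul_assoc]) ?_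
    split_ifs <;> simp [pow_succ]

theorem reflectionRep_apply_self {t : W} (ht : cs.IsReflection t) (ε : ℤˣ) :
    cs.reflectionRep t (t, ε) = (t, -ε) := by
  obtain ⟨v, i, rfl⟩ := ht
  obtain ⟨ν, rfl⟩ := cs.wordProd_surjective v
  set σ : ℤˣ := (-1) ^ (ris ν).count (s i)
  have hv : ∀ δ, cs.reflectionRep (π ν) (s i, δ) = (π ν * s i * (π ν)⁻¹, σ * δ) :=
    reflectionRep_wordProd_apply cs ν (s i)
  have hvinv : (cs.reflectionRep (π ν))⁻¹ (π ν * s i * (π ν)⁻¹, ε) = (s i, σ * ε) := by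
    rw [Equiv.Perm.inv_eq_iff_eq, hv, ← mul_assoc, Int.units_mul_self, one_mul]
  rw [map_mul, map_mul, map_inv, Equiv.Perm.mul_apply, Equiv.Perm.mul_apply, hvinv,
    reflectionRep_simple, reflectionRepSimple_apply, if_pos rfl, simple_mul_simple_self, one_mul,
    hv, mul_neg, ← mul_assoc, Int.units_mul_self, one_mul]

theorem mem_rightInvSeq_of_length_mul_lt {ω : List B} {t : W} (ht : cs.IsReflection t)
    (hlt : ℓ (π ω * t) < ℓ (π ω)) : t ∈ ris ω := by
  obtain ⟨μ, hμ, hμω⟩ := cs.exists_isReduced (π ω * t)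
  have hμt : t ∉ ris μ := fun hmem => by
    have := (cs.isRightInversion_of_mem_rightInvSeq hμ hmem).2
    rw [← hμω, mul_assoc, ht.mul_self, mul_one] at this
    omega
  have hω : π ω = π μ * t := by rw [← hμω, mul_assoc, ht.mul_self, mul_one]
  -- The sign `(-1) ^ count t (ris ω)` attached to `t` by `reflectionRep (π ω)` is `-1`, as
  -- `π ω = π μ * t` with `t ∉ ris μ`.
  have hsign := congr_arg Prod.snd (reflectionRep_wordProd_apply cs ω t 1)
  rw [hω, map_mul, Equiv.Perm.mul_apply, reflectionRep_apply_self cs ht,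
    reflectionRep_wordProd_apply, count_eq_zero.mpr hμt] at hsign
  rw [← count_pos_iff, Nat.pos_iff_ne_zero]
  rintro hzero
  simp [hzero] at hsign

theorem exists_eraseIdx_wordProd_eq_mul {ω : List B} {t : W} (ht : cs.IsReflection t)
    (hlt : ℓ (π ω * t) < ℓ (π ω)) : ∃ j < ω.length, π (ω.eraseIdx j) = π ω * t := by
  obtain ⟨j, hj, rfl⟩ := mem_iff_getElem.mp (cs.mem_rightInvSeq_of_length_mul_lt ht hlt)
  rw [length_rightInvSeq] at hj
  refine ⟨j, hj, ?_⟩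
  rw [← wordProd_mul_getD_rightInvSeq, getD_eq_getElem]

theorem isReduced_append_singleton_iff (α : List B) (i : B) :
    cs.IsReduced (α ++ [i]) ↔ cs.IsReduced α ∧ ℓ (π α) < ℓ (π α * s i) := by
  have hα := cs.length_wordProd_le α
  have hs := cs.length_mul_simple (π α) i
  rw [IsReduced, IsReduced, wordProd_append, wordProd_singleton, length_append, length_singleton]
  omega

theorem exists_reduced_sublist (ω : List B) :
    ∃ ω' : List B, ω'.Sublist ω ∧ cs.IsReduced ω' ∧ π ω' = π ω := by
  induction ω using List.reverseRecOn with
  | nil => exact ⟨[], Sublist.refl _, by simp [IsReduced], rfl⟩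
  | append_singleton α i ih =>
    obtain ⟨α', hsub, hred, hprod⟩ := ih
    rw [wordProd_append, wordProd_singleton, ← hprod]
    rcases cs.length_mul_simple (π α') i with hup | hdown
    · refine ⟨α' ++ [i], hsub.append (Sublist.refl _), ?_, by rw [wordProd_append, wordProd_singleton]⟩
      exact (cs.isReduced_append_singleton_iff α' i).2 ⟨hred, by omega⟩
    · obtain ⟨j, hj, hπ⟩ :=
        cs.exists_eraseIdx_wordProd_eq_mul (ω := α') (cs.isReflection_simple i) (by omega)
      refine ⟨α'.eraseIdx j, (eraseIdx_sublist _ _).trans (hsub.trans (sublist_append_left _ _)),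
        ?_, hπ⟩
      rw [IsReduced, hπ, length_eraseIdx_of_lt hj, ← hred]
      omega

def BruhatStep (u w : W) : Prop := ∃ t, cs.IsReflection t ∧ w = u * t ∧ ℓ u < ℓ w

def BruhatChain : W → W → Prop := Relation.ReflTransGen cs.BruhatStep

theorem exists_sublist_of_bruhatChain {u w : W} (h : cs.BruhatChain u w) {ω : List B}
    (hω : cs.IsReduced ω) (hπ : π ω = w) :
    ∃ ω' : List B, ω'.Sublist ω ∧ cs.IsReduced ω' ∧ π ω' = u := by
  induction h generalizing ω with
  | refl => exact ⟨ω, Sublist.refl _, hω, hπ⟩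
  | tail _ hstep ih =>
    obtain ⟨t, ht, rfl, hlt⟩ := hstep
    obtain ⟨j, -, hj⟩ := cs.exists_eraseIdx_wordProd_eq_mul ht
      (by rwa [hπ, mul_assoc, ht.mul_self, mul_one])
    obtain ⟨ρ, hρ, hρred, hρπ⟩ := cs.exists_reduced_sublist (ω.eraseIdx j)
    obtain ⟨σ, hσ, hσred, hσπ⟩ :=
      ih hρred (by rw [hρπ, hj, hπ, mul_assoc, ht.mul_self, mul_one])
    exact ⟨σ, hσ.trans (hρ.trans (eraseIdx_sublist _ _)), hσred, hσπ⟩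

variable {cs} in
theorem BruhatStep.mul_simple_eq_or {x y : W} (h : cs.BruhatStep x y) (i : B) :
    x * s i = y ∨ cs.BruhatStep (x * s i) (y * s i) := by
  obtain ⟨t, ht, rfl, hxy⟩ := h
  -- Exchange `t` in `ρ ++ [i]`, where `ρ` is reduced for `y * s i`: deleting the last letter
  -- yields `x = y * s i`, deleting another one yields a word for `x * s i` shorter than `ρ`.
  obtain ⟨ρ, hρ, hρπ⟩ := cs.exists_isReduced (x * t * s i)
  have hyρ : π (ρ ++ [i]) = x * t := by
    rw [wordProd_append, wordProd_singleton, ← hρπ, simple_mul_simple_cancel_right]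
  obtain ⟨j, hj, hx⟩ := cs.exists_eraseIdx_wordProd_eq_mul (ω := ρ ++ [i]) ht
    (by rwa [hyρ, mul_assoc, ht.mul_self, mul_one])
  rw [hyρ, mul_assoc, ht.mul_self, mul_one] at hx
  rw [length_append, length_singleton] at hj
  rcases Nat.lt_succ_iff_lt_or_eq.mp hj with hj | rfl
  · rw [eraseIdx_append_of_lt_length hj, wordProd_append, wordProd_singleton] at hx
    have hxs : x * s i = π (ρ.eraseIdx j) := by rw [← hx, simple_mul_simple_cancel_right]
    refine .inr ⟨s i * t * s i, by simpa using ht.conj (s i), by simp [mul_assoc], ?_⟩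
    rw [hxs, hρπ, hρ]
    calc ℓ (π (ρ.eraseIdx j)) ≤ (ρ.eraseIdx j).length := cs.length_wordProd_le _
      _ < ρ.length := by rw [length_eraseIdx_of_lt hj]; omega
  · rw [eraseIdx_append_of_length_le le_rfl, Nat.sub_self, eraseIdx_cons_zero, append_nil,
      ← hρπ] at hx
    exact .inl (by nth_rewrite 1 [← hx]; exact cs.simple_mul_simple_cancel_right i)

variable {cs} in
theorem BruhatChain.mul_simple_or {x y : W} (h : cs.BruhatChain x y) (i : B) :
    cs.BruhatChain (x * s i) y ∨ cs.BruhatChain (x * s i) (y * s i) := by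
  induction h with
  | refl => exact .inr .refl
  | tail _ hzy ih =>
    rcases ih with hxz | hxz
    · exact .inl (hxz.tail hzy)
    · rcases hzy.mul_simple_eq_or i with heq | hstep
      · exact .inl (heq ▸ hxz)
      · exact .inr (hxz.tail hstep)

theorem bruhatChain_wordProd_of_sublist {ω σ : List B} (hω : cs.IsReduced ω)
    (hσ : σ.Sublist ω) : cs.BruhatChain (π σ) (π ω) := by
  induction ω using List.reverseRecOn generalizing σ with
  | nil => rw [sublist_nil.mp hσ]; exact .refl
  | append_singleton α i ih =>
    obtain ⟨hα, hup⟩ := (cs.isReduced_append_singleton_iff α i).1 hω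
    have hstep : cs.BruhatStep (π α) (π (α ++ [i])) :=
      ⟨s i, cs.isReflection_simple i, by rw [wordProd_append, wordProd_singleton], by
        rwa [wordProd_append, wordProd_singleton]⟩
    obtain ⟨σ₁, σ₂, rfl, hσ₁, hσ₂⟩ := sublist_append_iff.mp hσ
    rcases sublist_singleton.mp hσ₂ with rfl | rfl
    · rw [append_nil]
      exact (ih hα hσ₁).tail hstep
    · rw [wordProd_append, wordProd_singleton]
      rcases (ih hα hσ₁).mul_simple_or i with h | h
      · exact h.tail hstep
      · rwa [wordProd_append, wordProd_singleton]

variable {cs} in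
theorem BruhatChain.length_le {u w : W} (h : cs.BruhatChain u w) : cs.length u ≤ cs.length w := by
  induction h with
  | refl => exact le_rfl
  | tail _ hstep ih => obtain ⟨_, _, _, hlt⟩ := hstep; omega

variable {cs} in
theorem BruhatChain.length_lt_of_ne {u w : W} (h : cs.BruhatChain u w) (hne : u ≠ w) :
    cs.length u < cs.length w := by
  rcases h.cases_tail with rfl | ⟨v, huv, _, _, _, hlt⟩
  · exact absurd rfl hne
  · exact (BruhatChain.length_le huv).trans_lt hlt

end CoxeterSystem

theorem bruhatLE_iff_bruhatChain (cs : CoxeterSystem M W) {x w : W} :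
    bruhatLE cs x w ↔ cs.BruhatChain x w := by
  constructor
  · rintro ⟨ω, hω, rfl, ω', hω', -, rfl⟩
    exact cs.bruhatChain_wordProd_of_sublist hω hω'
  · intro h
    obtain ⟨ω, hω, rfl⟩ := cs.exists_isReduced w
    obtain ⟨ω', hω', hred', rfl⟩ := cs.exists_sublist_of_bruhatChain h hω rfl
    exact ⟨ω, hω, rfl, ω', hω', hred', rfl⟩

theorem length_lt_of_bruhatLT (cs : CoxeterSystem M W) {x w : W} (h : bruhatLT cs x w) :
    cs.length x < cs.length w :=
  ((bruhatLE_iff_bruhatChain cs).1 h.1).length_lt_of_ne h.2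

abbrev bruhatPartialOrder (cs : CoxeterSystem M W) : PartialOrder W where
  le := bruhatLE cs
  lt := bruhatLT cs
  le_refl _ := (bruhatLE_iff_bruhatChain cs).2 .refl
  le_trans _ _ _ hxy hyz := (bruhatLE_iff_bruhatChain cs).2
    (((bruhatLE_iff_bruhatChain cs).1 hxy).trans ((bruhatLE_iff_bruhatChain cs).1 hyz))
  lt_iff_le_not_ge x w := by
    refine ⟨fun h => ⟨h.1, fun hwx => ?_⟩, fun ⟨hxw, hwx⟩ => ⟨hxw, ?_⟩⟩
    · exact (length_lt_of_bruhatLT cs h).not_ge ((bruhatLE_iff_bruhatChain cs).1 hwx).length_le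
    · rintro rfl; exact hwx hxw
  le_antisymm x w hxw hwx := by
    by_contra hne
    exact (length_lt_of_bruhatLT cs ⟨hxw, hne⟩).not_ge ((bruhatLE_iff_bruhatChain cs).1 hwx).length_le

namespace LaurentPolynomial

open Polynomial

variable (R : Type*) [Ring R]

def polynomialDegreeLE (c : ℤ) : AddSubgroup R[T;T⁻¹] where
  carrier := {f | ∃ p : R[X], f = p.toLaurent ∧ ∀ i : ℕ, p.coeff i ≠ 0 → (i : ℤ) ≤ c}
  zero_mem' := ⟨0, by simp, by simp⟩
  add_mem' := by
    rintro _ _ ⟨p, rfl, hp⟩ ⟨q, rfl, hq⟩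
    refine ⟨p + q, by simp, fun i hi => ?_⟩
    by_cases hpi : p.coeff i = 0
    · exact hq i (by simpa [hpi] using hi)
    · exact hp i hpi
  neg_mem' := by
    rintro _ ⟨p, rfl, hp⟩
    exact ⟨-p, by simp, fun i hi => hp i (by simpa using hi)⟩

variable {R}

theorem polynomialDegreeLE_mono {c c' : ℤ} (h : c ≤ c') :
    polynomialDegreeLE R c ≤ polynomialDegreeLE R c' := by
  rintro _ ⟨p, rfl, hp⟩
  exact ⟨p, rfl, fun i hi => (hp i hi).trans h⟩

theorem toLaurent_mem_polynomialDegreeLE {p : R[X]} {c : ℤ}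
    (hp : ∀ i : ℕ, p.coeff i ≠ 0 → (i : ℤ) ≤ c) : p.toLaurent ∈ polynomialDegreeLE R c :=
  ⟨p, rfl, hp⟩

theorem mul_mem_polynomialDegreeLE {f g : R[T;T⁻¹]} {c c' : ℤ} (hf : f ∈ polynomialDegreeLE R c)
    (hg : g ∈ polynomialDegreeLE R c') : f * g ∈ polynomialDegreeLE R (c + c') := by
  obtain ⟨p, rfl, hp⟩ := hf
  obtain ⟨q, rfl, hq⟩ := hg
  refine ⟨p * q, by simp, fun n hn => ?_⟩
  obtain ⟨⟨i, j⟩, hij, hne⟩ := Finset.exists_ne_zero_of_sum_ne_zero (coeff_mul p q n ▸ hn)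
  have := hp i (left_ne_zero_of_mul hne)
  have := hq j (right_ne_zero_of_mul hne)
  have : i + j = n := Finset.HasAntidiagonal.mem_antidiagonal.mp hij
  omega

theorem neg_one_pow_mul_mem_polynomialDegreeLE_iff {f : R[T;T⁻¹]} {c : ℤ} (k : ℕ) :
    (-1) ^ k * f ∈ polynomialDegreeLE R c ↔ f ∈ polynomialDegreeLE R c := by
  rcases neg_one_pow_eq_or R[T;T⁻¹] k with h | h <;> simp [h]

end LaurentPolynomial

section UnitriangularInversion

open Polynomial Set

variable {α R : Type*} [PartialOrder α] [CommRing R] {ℓ : α → ℕ} {m : α → R[T;T⁻¹]}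
  {P : α → α → R[X]}

theorem finsum_Ici_eq_add_finsum_Ioi (hm : (Function.support m).Finite) {w : α} (hP : P w w = 1) :
    ∑ᶠ v ∈ Ici w, (-1) ^ ℓ v * m v * (P w v).toLaurent =
      (-1) ^ ℓ w * m w + ∑ᶠ v ∈ Ioi w, (-1) ^ ℓ v * m v * (P w v).toLaurent := by
  have hsupp : (Function.support fun v => (-1) ^ ℓ v * m v * (P w v).toLaurent) ⊆
      Function.support m :=
    Function.support_subset_iff'.2 fun v hv => by simp [Function.notMem_support.1 hv]
  rw [← Ioi_insert, finsum_mem_insert' _ self_notMem_Ioi ((hm.subset hsupp).inter_of_right _),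
    hP, map_one, mul_one]

theorem finsum_Ioi_mem_polynomialDegreeLE {w : α} {d : ℤ}
    (hPdeg : ∀ v, w < v → ∀ i : ℕ, (P w v).coeff i ≠ 0 → 2 * (i : ℤ) < (ℓ v : ℤ) - ℓ w)
    (hm : ∀ v, w < v → m v ∈ polynomialDegreeLE R (d - ℓ v)) :
    ∑ᶠ v ∈ Ioi w, (-1) ^ ℓ v * m v * (P w v).toLaurent ∈ polynomialDegreeLE R (d - ℓ w) := by
  refine finsum_mem_induction (· ∈ polynomialDegreeLE R (d - ℓ w)) (zero_mem _)
    (fun _ _ => add_mem) fun v hv => ?_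
  rw [mul_assoc, neg_one_pow_mul_mem_polynomialDegreeLE_iff]
  refine polynomialDegreeLE_mono (by omega) (mul_mem_polynomialDegreeLE (hm v hv)
    (c' := ℓ v - ℓ w - 1) (toLaurent_mem_polynomialDegreeLE fun i hi => ?_))
  have := hPdeg v hv i hi
  omega

theorem trace_mem_polynomialDegreeLE_iff (d : ℤ) (hm : (Function.support m).Finite)
    (hPdiag : ∀ w, P w w = 1)
    (hPdeg : ∀ x w, x < w → ∀ i : ℕ, (P x w).coeff i ≠ 0 → 2 * (i : ℤ) < (ℓ w : ℤ) - ℓ x)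
    (Tr : α → R[T;T⁻¹])
    (hTr : ∀ x, Tr x = ∑ᶠ w ∈ {w | x ≤ w}, (-1) ^ ℓ w * m w * (P x w).toLaurent) (x : α) :
    (∀ w, x ≤ w → Tr w ∈ polynomialDegreeLE R (d - ℓ w)) ↔
      (∀ w, x ≤ w → m w ∈ polynomialDegreeLE R (d - ℓ w)) := by
  have hTr_eq w : Tr w = (-1) ^ ℓ w * m w +
      ∑ᶠ v ∈ Ioi w, (-1) ^ ℓ v * m v * (P w v).toLaurent :=
    (hTr w).trans (finsum_Ici_eq_add_finsum_Ioi hm (hPdiag w))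
  constructor
  · intro hTrmem w hxw
    by_cases hw : w ∈ Function.support m
    swap
    · rw [Function.notMem_support.1 hw]; exact zero_mem _
    -- `>` is well founded on the finite support of `m`, so we may induct downwards.
    refine (hm.wellFoundedOn (r := (· > ·))).induction hw
      (P := fun w => x ≤ w → m w ∈ polynomialDegreeLE R (d - ℓ w)) (fun w _ ih hxw => ?_) hxw
    have hsum := finsum_Ioi_mem_polynomialDegreeLE (hPdeg w) fun v hwv => by
      by_cases hv : v ∈ Function.support m
      · exact ih v hv hwv (hxw.trans hwv.le)
      · rw [Function.notMem_support.1 hv]; exact zero_mem _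
    rw [← neg_one_pow_mul_mem_polynomialDegreeLE_iff (ℓ w), eq_sub_of_add_eq (hTr_eq w).symm]
    exact sub_mem (hTrmem w hxw) hsum
  · intro hmmem w hxw
    rw [hTr_eq]
    exact add_mem ((neg_one_pow_mul_mem_polynomialDegreeLE_iff _).2 (hmmem w hxw))
      (finsum_Ioi_mem_polynomialDegreeLE (hPdeg w) fun v hwv => hmmem v (hxw.trans hwv.le))

end UnitriangularInversion

theorem trace_poly_bound_iff_multiplicity_poly_bound_general
    (cs : CoxeterSystem M W) (d : ℤ)
    (m : W → LaurentPolynomial ℤ) (hm : (Function.support m).Finite)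
    (P : W → W → Polynomial ℤ)
    (hPdiag : ∀ w : W, P w w = 1)
    (hPdeg : ∀ x w : W, bruhatLT cs x w →
      ∀ i : ℕ, (P x w).coeff i ≠ 0 → 2 * (i : ℤ) < (cs.length w : ℤ) - cs.length x)
    (Tr : W → LaurentPolynomial ℤ)
    (hTr : ∀ x : W, Tr x = ∑ᶠ w ∈ {w : W | bruhatLE cs x w},
      (-1 : LaurentPolynomial ℤ) ^ cs.length w * m w * (P x w).toLaurent)
    (x : W) :
    (∀ w : W, bruhatLE cs x w → ∃ p : Polynomial ℤ, Tr w = p.toLaurent ∧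
      ∀ i : ℕ, p.coeff i ≠ 0 → (i : ℤ) ≤ d - cs.length w) ↔
    (∀ w : W, bruhatLE cs x w → ∃ p : Polynomial ℤ, m w = p.toLaurent ∧
      ∀ i : ℕ, p.coeff i ≠ 0 → (i : ℤ) ≤ d - cs.length w) := by
  let _ : PartialOrder W := bruhatPartialOrder cs
  exact trace_mem_polynomialDegreeLE_iff d hm hPdiag hPdeg Tr hTr x

/-- let `d ∈ ℤ`, `m : W → ℤ[q,q⁻¹]` finitely supported, and `P : W × W → ℤ[q]` with
`P(w,w) = 1`, `P(x,w) = 0` unless `x ≤ w`, and `deg P(x,w) < (ℓ(w) - ℓ(x))/2` for `x < w`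
(expressed coefficientwise).  Set `Tr(x) = Σ_{w ≥ x} (-1)^{ℓ(w)} m(w) P(x,w)`.
Then for fixed `x`: (`Tr(w)` is a polynomial in `q` of degree `≤ d - ℓ(w)` for all `w ≥ x`) iff
(`m(w)` is a polynomial in `q` of degree `≤ d - ℓ(w)` for all `w ≥ x`).
Here the Laurent variable `T 1` is `q`, and degree bounds are expressed coefficientwise. -/
theorem trace_poly_bound_iff_multiplicity_poly_bound
    (cs : CoxeterSystem M W) (d : ℤ)
    (m : W → LaurentPolynomial ℤ) (hm : (Function.support m).Finite)
    (P : W → W → Polynomial ℤ)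
    (hPdiag : ∀ w : W, P w w = 1)
    (hPvanish : ∀ x w : W, ¬ bruhatLE cs x w → P x w = 0)
    (hPdeg : ∀ x w : W, bruhatLT cs x w →
      ∀ i : ℕ, (P x w).coeff i ≠ 0 → 2 * (i : ℤ) < (cs.length w : ℤ) - cs.length x)
    (Tr : W → LaurentPolynomial ℤ)
    (hTr : ∀ x : W, Tr x = ∑ᶠ w ∈ {w : W | bruhatLE cs x w},
      (-1 : LaurentPolynomial ℤ) ^ cs.length w * m w * (P x w).toLaurent)
    (x : W) :
    (∀ w : W, bruhatLE cs x w → ∃ p : Polynomial ℤ, Tr w = p.toLaurent ∧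
      ∀ i : ℕ, p.coeff i ≠ 0 → (i : ℤ) ≤ d - cs.length w) ↔
    (∀ w : W, bruhatLE cs x w → ∃ p : Polynomial ℤ, m w = p.toLaurent ∧
      ∀ i : ℕ, p.coeff i ≠ 0 → (i : ℤ) ≤ d - cs.length w) :=
  trace_poly_bound_iff_multiplicity_poly_bound_general cs d m hm P hPdiag hPdeg Tr hTr x
end
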